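/- arXiv:1311.1255 — 2 statements merged into one kernel-verified Lean document; each statement's English description precedes it below -/
import Mathlib

section
/- In a free product G = A * B, if g ∈ G does not lie in the canonical image of A, then A ∩ g A g⁻¹ = {1}. -/
open Monoid

/-!
Write `g⁻¹ = a₀ t` with `a₀ ∈ A` and `t = t₁ ⋯ tₙ` a reduced word whose first letter is not in `A`;
`n ≥ 1` because `g ∉ A`. For `1 ≠ b ∈ A`, `g b g⁻¹ = t⁻¹ (a₀⁻¹ b a₀) t`, and
`tₙ⁻¹ ⋯ t₁⁻¹ (a₀⁻¹ b a₀) t₁ ⋯ tₙ` is a reduced word of length `2n + 1 ≥ 3`, whereas elements of `A`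
have reduced length at most one.
-/

namespace Subgroup

variable {G K : Type*} [Group G] [Group K]

def IsMalnormal (H : Subgroup G) : Prop :=
  ∀ g ∉ H, ∀ h ∈ H, g * h * g⁻¹ ∈ H → h = 1

theorem IsMalnormal.inf_map_conj_eq_bot {H : Subgroup G} (hH : H.IsMalnormal) {g : G}
    (hg : g ∉ H) : H ⊓ H.map (MulAut.conj g).toMonoidHom = ⊥ := by
  rw [eq_bot_iff]
  rintro _ ⟨hx, h, hh, rfl⟩
  simp [hH g hg h hh hx]

theorem IsMalnormal.comap {T : Subgroup K} (hT : T.IsMalnormal) {f : G →* K}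
    (hf : Function.Injective f) : (T.comap f).IsMalnormal := by
  intro g hg h hh hconj
  apply hf
  rw [map_one]
  exact hT (f g) hg (f h) hh (by simpa using hconj)

end Subgroup

namespace Monoid.CoprodI

variable {ι : Type*}

section Monoid

variable {M : ι → Type*} [∀ i, Monoid (M i)] [DecidableEq ι] [∀ i, DecidableEq (M i)]

theorem Word.of_equivPair_head_mul_prod_tail (i : ι) (w : Word M) :
    of (Word.equivPair i w).head * (Word.equivPair i w).tail.prod = w.prod := by
  rw [← Word.prod_smul, Word.equivPair_head_smul_equivPair_tail]

theorem Word.length_toList_equiv_of_le_one {i : ι} (m : M i) :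
    (Word.equiv (of m)).toList.length ≤ 1 := by
  rw [show Word.equiv (of m) = of m • Word.empty from rfl,
    ← Word.rcons_eq_smul ⟨m, .empty, by simp [Word.fstIdx]⟩, Word.rcons]
  split <;> simp

end Monoid

section Group

variable {G : ι → Type*} [∀ i, Group (G i)]

theorem NeWord.prod_inv_mul_of_mul_prod_notMem_range [DecidableEq ι] [∀ i, DecidableEq (G i)]
    {i j k : ι} (w : NeWord G j k) (hj : j ≠ i) {b : G i} (hb : b ≠ 1) :
    w.prod⁻¹ * of b * w.prod ∉ (of : G i →* CoprodI G).range := by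
  rintro ⟨a, ha⟩
  let u := (w.inv.append hj (singleton b hb)).append hj.symm w
  have hu : Word.equiv (of a) = u.toWord := by
    rw [ha, ← w.inv_prod, ← prod_singleton b hb, ← append_prod, ← append_prod]
    exact Word.equiv.apply_symm_apply u.toWord
  have hlen := Word.length_toList_equiv_of_le_one (M := G) a
  rw [hu] at hlen
  have hinv_pos := List.length_pos_of_ne_nil w.inv.toList_ne_nil
  have hw_pos := List.length_pos_of_ne_nil w.toList_ne_nil
  simp only [u, toWord, toList, List.length_append, List.length_cons] at hlen
  omega

theorem isMalnormal_range_of (i : ι) : (of : G i →* CoprodI G).range.IsMalnormal := by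
  classical
  rintro g hg _ ⟨b, rfl⟩ hconj
  rw [map_eq_one_iff _ (of_injective i)]
  by_contra hb
  set p := Word.equivPair i (Word.equiv g⁻¹)
  have hg_inv : g⁻¹ = of p.head * p.tail.prod :=
    ((Word.of_equivPair_head_mul_prod_tail i _).trans (Word.equiv.symm_apply_apply g⁻¹)).symm
  have htail : p.tail ≠ .empty := by
    intro htail
    apply hg
    refine ⟨p.head⁻¹, ?_⟩
    rw [map_inv, ← inv_inj, inv_inv, hg_inv, htail, Word.prod_empty, mul_one]
  obtain ⟨j, k, w, hw⟩ := NeWord.of_word p.tail htail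
  have hj : j ≠ i := by simpa [← hw, Word.fstIdx, NeWord.toWord] using p.fstIdx_ne
  have hb' : p.head⁻¹ * b * p.head ≠ 1 := by
    rwa [← conj_eq_one_iff (a := p.head⁻¹), inv_inv] at hb
  apply w.prod_inv_mul_of_mul_prod_notMem_range hj hb'
  convert hconj using 1
  rw [← inv_inv g, hg_inv, NeWord.prod, hw]
  simp only [map_mul, map_inv]
  group

end Group

end Monoid.CoprodI

namespace Monoid.Coprod

universe u v

variable (A : Type u) (B : Type v) [Group A] [Group B]

/-- Reduced words are only available for `Monoid.CoprodI`, whose factors must share a universe. -/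
abbrev boolFamily : Bool → Type max u v := fun b => cond b (ULift.{v} A) (ULift.{u} B)

instance : ∀ b, Group (boolFamily A B b)
  | true => inferInstanceAs (Group (ULift.{v} A))
  | false => inferInstanceAs (Group (ULift.{u} B))

def toCoprodI : A ∗ B →* CoprodI (boolFamily A B) :=
  lift (CoprodI.of (i := true) |>.comp MulEquiv.ulift.symm.toMonoidHom)
    (CoprodI.of (i := false) |>.comp MulEquiv.ulift.symm.toMonoidHom)

def ofCoprodI : CoprodI (boolFamily A B) →* A ∗ B :=
  CoprodI.lift fun
    | true => inl.comp MulEquiv.ulift.toMonoidHom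
    | false => inr.comp MulEquiv.ulift.toMonoidHom

theorem ofCoprodI_toCoprodI (x : A ∗ B) : ofCoprodI A B (toCoprodI A B x) = x :=
  DFunLike.congr_fun (hom_ext (f := (ofCoprodI A B).comp (toCoprodI A B)) (g := .id _) rfl rfl) x

theorem toCoprodI_injective : Function.Injective (toCoprodI A B) :=
  Function.LeftInverse.injective (ofCoprodI_toCoprodI A B)

theorem range_inl_eq_comap_toCoprodI :
    (inl : A →* A ∗ B).range =
      (CoprodI.of (M := boolFamily A B) (i := true)).range.comap (toCoprodI A B) := by
  ext x
  constructor
  · rintro ⟨a, rfl⟩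
    exact ⟨MulEquiv.ulift.symm a, rfl⟩
  · rintro ⟨a, ha⟩
    refine ⟨MulEquiv.ulift a, ?_⟩
    rw [← ofCoprodI_toCoprodI A B x, ← ha]
    rfl

theorem isMalnormal_range_inl : (inl : A →* A ∗ B).range.IsMalnormal := by
  rw [range_inl_eq_comap_toCoprodI]
  exact (CoprodI.isMalnormal_range_of true).comap (toCoprodI_injective A B)

end Monoid.Coprod

/-- In a free product `G = A * B`, if `g` does not lie in the canonical image of
`A`, then `A ⊓ g A g⁻¹ = ⊥`. -/
theorem free_product_inl_inter_conj_inl_eq_bot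
    (A B : Type*) [Group A] [Group B] (g : Coprod A B)
    (hg : g ∉ (Coprod.inl : A →* Coprod A B).range) :
    (Coprod.inl : A →* Coprod A B).range ⊓
      Subgroup.map (MulAut.conj g).toMonoidHom
        (Coprod.inl : A →* Coprod A B).range = ⊥ :=
  (Coprod.isMalnormal_range_inl A B).inf_map_conj_eq_bot hg
end

section
/- A nontrivial free product has trivial center: if A and B are nontrivial groups, then the center of A * B is the trivial subgroup. Consequently, any group with nontrivial center (such as ℤ) is freely indecomposable. -/
/-!
A nontrivial element `g` of a free product has a reduced word running from a factor `p` to a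
factor `q`, and reduced words are unique. If `p ≠ q`, multiplying `g` on the left and on the right
by the inverse of its first letter gives reduced words starting in different factors; if `p = q`,
a nontrivial letter from another factor does the same. Either way `g` is not central.
-/

open Monoid

universe u v

namespace Monoid.CoprodI

variable {ι : Type*} {M : ι → Type*} [∀ i, Monoid (M i)]
variable {G : ι → Type*} [∀ i, Group (G i)]

theorem exists_neWord_prod_eq {x : CoprodI M} (hx : x ≠ 1) :
    ∃ (i j : ι) (w : NeWord M i j), w.prod = x := by
  classical
  have hw : Word.equiv x ≠ .empty := fun h => hx <| by
    rw [← Word.equiv.symm_apply_apply x, h]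
    exact Word.prod_empty
  obtain ⟨i, j, w, hw⟩ := NeWord.of_word _ hw
  exact ⟨i, j, w, by rw [NeWord.prod, hw]; exact Word.equiv.symm_apply_apply x⟩

namespace NeWord

theorem head_ne_one {i j : ι} (w : NeWord M i j) : w.head ≠ 1 := by
  induction w with
  | singleton _ hx => exact hx
  | append _ _ _ ih _ => exact ih

theorem fstIdx_eq_of_prod_eq {i j k l : ι} {w : NeWord M i j} {w' : NeWord M k l}
    (h : w.prod = w'.prod) : i = k := by
  classical
  have hw : w.toWord = w'.toWord := Word.equiv.symm.injective h
  have hhead := congrArg (fun v : Word M => v.toList.head?) hw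
  simp only [toWord, toList_head?, Option.some.injEq] at hhead
  exact congrArg Sigma.fst hhead

theorem prod_eq_of_head_or_head_mul_tail {i j : ι} (w : NeWord M i j) :
    (i = j ∧ w.prod = of w.head) ∨
      ∃ (k : ι) (w' : NeWord M k j), k ≠ i ∧ w.prod = of w.head * w'.prod := by
  induction w with
  | singleton x hx => exact .inl ⟨rfl, prod_singleton x hx⟩
  | @append i p q j w₁ hpq w₂ ih₁ _ =>
    rcases ih₁ with ⟨rfl, h₁⟩ | ⟨k, w', hki, h₁⟩
    · exact .inr ⟨q, w₂, hpq.symm, by rw [append_prod, h₁, append_head]⟩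
    · exact .inr ⟨k, append w' hpq w₂, hki, by simp [h₁, mul_assoc]⟩

theorem prod_notMem_center_of_ne {i j : ι} (w : NeWord G i j) (hij : i ≠ j) :
    w.prod ∉ Subgroup.center (CoprodI G) := by
  intro hw
  obtain ⟨hij', -⟩ | ⟨k, w', hki, hprod⟩ := w.prod_eq_of_head_or_head_mul_tail
  · exact hij hij'
  have hc : w.head⁻¹ ≠ 1 := inv_ne_one.2 w.head_ne_one
  have hcomm := Subgroup.mem_center_iff.1 hw (of w.head⁻¹)
  rw [← prod_singleton _ hc, ← append_prod (hne := hij.symm)] at hcomm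
  rw [prod_singleton, hprod, ← mul_assoc, ← map_mul, inv_mul_cancel, map_one, one_mul] at hcomm
  exact hki (fstIdx_eq_of_prod_eq hcomm)

theorem prod_notMem_center_of_ne_of_ne {i j k : ι} (w : NeWord G i j) (hki : k ≠ i)
    (hkj : k ≠ j) [Nontrivial (G k)] : w.prod ∉ Subgroup.center (CoprodI G) := by
  intro hw
  obtain ⟨c, hc⟩ := exists_ne (1 : G k)
  have hcomm := Subgroup.mem_center_iff.1 hw (of c)
  rw [← prod_singleton _ hc, ← append_prod (hne := hki), ← append_prod (hne := hkj.symm)]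
    at hcomm
  exact hki (fstIdx_eq_of_prod_eq hcomm)

end NeWord

theorem center_eq_bot {i j : ι} (hij : i ≠ j) [Nontrivial (G i)] [Nontrivial (G j)] :
    Subgroup.center (CoprodI G) = ⊥ := by
  refine (Subgroup.eq_bot_iff_forall _).2 fun x hx => ?_
  by_contra hx1
  obtain ⟨p, q, w, rfl⟩ := exists_neWord_prod_eq hx1
  rcases ne_or_eq p q with hpq | rfl
  · exact w.prod_notMem_center_of_ne hpq hx
  · rcases ne_or_eq i p with hip | rfl
    · exact w.prod_notMem_center_of_ne_of_ne hip hip hx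
    · exact w.prod_notMem_center_of_ne_of_ne hij.symm hij.symm hx

instance instGroupCond {M N : Type u} [Group M] [Group N] : ∀ b : Bool, Group (cond b M N)
  | true => ‹Group M›
  | false => ‹Group N›

def coprodEquivCoprodI (M N : Type u) [Group M] [Group N] :
    Coprod M N ≃* CoprodI fun b : Bool => cond b M N :=
  MonoidHom.toMulEquiv
    (Coprod.lift (of (M := fun b : Bool => cond b M N) (i := true))
      (of (M := fun b : Bool => cond b M N) (i := false)))
    (lift fun b => b.rec (motive := fun b => cond b M N →* Coprod M N) Coprod.inr Coprod.inl)
    (by ext <;> simp)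
    (by ext (_ | _) <;> simp)

end Monoid.CoprodI

theorem Subgroup.center_eq_bot_of_mulEquiv {H K : Type*} [Group H] [Group K] (e : H ≃* K)
    (h : center K = ⊥) : center H = ⊥ := by
  refine (eq_bot_iff_forall _).2 fun x hx => ?_
  have hex : e x ∈ center K := (centerCongr e ⟨x, hx⟩).2
  simpa [h] using hex

theorem Monoid.Coprod.center_eq_bot (A : Type u) (B : Type v) [Group A] [Group B]
    [Nontrivial A] [Nontrivial B] : Subgroup.center (Coprod A B) = ⊥ := by
  have : Nontrivial (cond true (ULift.{v} A) (ULift.{u} B)) :=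
    inferInstanceAs (Nontrivial (ULift A))
  have : Nontrivial (cond false (ULift.{v} A) (ULift.{u} B)) :=
    inferInstanceAs (Nontrivial (ULift B))
  exact Subgroup.center_eq_bot_of_mulEquiv
    ((MulEquiv.coprodCongr MulEquiv.ulift.symm MulEquiv.ulift.symm).trans
      (CoprodI.coprodEquivCoprodI (ULift.{v} A) (ULift.{u} B)))
    (CoprodI.center_eq_bot (i := true) (j := false) (by decide))

/-- A nontrivial free product has trivial center; consequently any group with
nontrivial center is not isomorphic to a free product of two nontrivial
groups (so it is freely indecomposable into nontrivial factors). -/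
theorem free_product_center_eq_bot
    (A B : Type*) [Group A] [Group B] [Nontrivial A] [Nontrivial B] :
    Subgroup.center (Coprod A B) = ⊥ ∧
      ∀ (H : Type*) [Group H], Subgroup.center H ≠ ⊥ →
        IsEmpty (H ≃* Coprod A B) :=
  ⟨Coprod.center_eq_bot A B, fun _ _ hH =>
    ⟨fun e => hH (Subgroup.center_eq_bot_of_mulEquiv e (Coprod.center_eq_bot A B))⟩⟩
end
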